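/- arXiv:math/0512541 — 6 statements merged into one kernel-verified Lean document; each statement's English description precedes it below -/
import Mathlib

section
/- Let E be a normed vector space over ℝ (or ℂ) and let L : E → E be a linear map that is power-bounded, i.e. there is a constant C ≥ 0 such that ‖Lⁿψ‖ ≤ C·‖ψ‖ for all ψ ∈ E and all n ∈ ℕ. Then the kernel of (L − I)² equals the kernel of L − I; that is, every ψ ∈ E with (L − I)((L − I)ψ) = 0 satisfies Lψ = ψ. (In particular, the eigenvalue 1 of L admits no generalized eigenvectors of rank two, so for a transfer operator preserving the L¹ norm the algebraic and geometric multiplicities of the eigenvalue 1 coincide.) -/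
/-! If `φ = Lψ - ψ` is fixed by `L`, then `Lⁿψ = ψ + nφ` grows linearly in `n` unless `φ = 0`,
which power-boundedness rules out. -/

theorem Module.End.pow_apply_eq_add_nsmul {R M : Type*} [Semiring R] [AddCommMonoid M]
    [Module R M] {L : Module.End R M} {ψ φ : M} (hψ : L ψ = ψ + φ) (hφ : L φ = φ) (n : ℕ) :
    (L ^ n) ψ = ψ + n • φ := by
  induction n with
  | zero => simp
  | succ n ih =>
    rw [pow_succ', Module.End.mul_apply, ih, map_add, map_nsmul, hψ, hφ, succ_nsmul, add_assoc,
      add_comm φ]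

theorem eq_zero_of_forall_norm_add_nsmul_le {E : Type*} [NormedAddCommGroup E]
    [NormedSpace ℝ E] (ψ φ : E) (M : ℝ) (h : ∀ n : ℕ, ‖ψ + n • φ‖ ≤ M) : φ = 0 := by
  by_contra hφ
  obtain ⟨n, hn⟩ := exists_lt_nsmul (norm_pos_iff.2 hφ) (M + ‖ψ‖)
  have hle : ‖n • φ‖ ≤ ‖ψ + n • φ‖ + ‖ψ‖ := norm_le_add_norm_add' ψ (n • φ)
  rw [RCLike.norm_nsmul ℝ] at hle
  linarith [h n]

theorem power_bounded_no_rank_two_generalized_eigenvectors_general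
    {E : Type*} [NormedAddCommGroup E] [NormedSpace ℝ E]
    (L : E →ₗ[ℝ] E) (C : ℝ)
    (hpb : ∀ (n : ℕ) (ψ : E), ‖(L ^ n) ψ‖ ≤ C * ‖ψ‖)
    (ψ : E) (hψ : (L - (LinearMap.id : E →ₗ[ℝ] E))
      ((L - (LinearMap.id : E →ₗ[ℝ] E)) ψ) = 0) :
    L ψ = ψ := by
  set φ := L ψ - ψ
  have hφ : L φ = φ := by
    simpa only [LinearMap.sub_apply, LinearMap.id_apply, sub_eq_zero] using hψ
  have hpow := Module.End.pow_apply_eq_add_nsmul (add_sub_cancel ψ (L ψ)).symm hφ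
  exact sub_eq_zero.1 <|
    eq_zero_of_forall_norm_add_nsmul_le ψ φ (C * ‖ψ‖) fun n ↦ hpow n ▸ hpb n ψ

/-- If `L` is a power-bounded linear map on a real normed
vector space `E` (i.e. `‖Lⁿ ψ‖ ≤ C ‖ψ‖` for all `n` and `ψ`), then
`ker (L - I)² = ker (L - I)`: every `ψ` with `(L - I)((L - I) ψ) = 0`
satisfies `L ψ = ψ`. -/
theorem power_bounded_no_rank_two_generalized_eigenvectors
    {E : Type*} [NormedAddCommGroup E] [NormedSpace ℝ E]
    (L : E →ₗ[ℝ] E) (C : ℝ) (hC : 0 ≤ C)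
    (hpb : ∀ (n : ℕ) (ψ : E), ‖(L ^ n) ψ‖ ≤ C * ‖ψ‖)
    (ψ : E) (hψ : (L - (LinearMap.id : E →ₗ[ℝ] E))
      ((L - (LinearMap.id : E →ₗ[ℝ] E)) ψ) = 0) :
    L ψ = ψ :=
  power_bounded_no_rank_two_generalized_eigenvectors_general L C hpb ψ hψ
end

section
/- Let (M, 𝒜, m) be a measure space and let L : L¹(m; ℝ) → L¹(m; ℝ) be a linear map that is positive (if 0 ≤ φ almost everywhere then 0 ≤ Lφ almost everywhere) and preserves integrals (∫_M Lφ dm = ∫_M φ dm for every φ ∈ L¹(m)). If φ ∈ L¹(m) satisfies Lφ = φ, then the positive and negative parts of φ are also fixed: L(φ⁺) = φ⁺ and L(φ⁻) = φ⁻, where φ⁺ = max{φ, 0} and φ⁻ = max{−φ, 0}. -/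
/-! Positivity gives `L φ⁺ ≥ L φ = φ` and `L φ⁺ ≥ 0`, hence `L φ⁺ ≥ φ⁺`; since `L φ⁺` and `φ⁺`
have the same integral, they are equal in `L¹`. The negative part of `φ` is the positive part of
the fixed point `-φ`. -/

open MeasureTheory

theorem MeasureTheory.Lp.eq_of_le_of_integral_eq {α : Type*} [MeasurableSpace α]
    {μ : Measure α} {f g : Lp ℝ 1 μ} (hfg : f ≤ g) (h : ∫ x, f x ∂μ = ∫ x, g x ∂μ) :
    f = g :=
  Lp.ext <| (integral_eq_iff_of_ae_le (L1.integrable_coeFn f) (L1.integrable_coeFn g)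
    ((Lp.coeFn_le f g).2 hfg)).1 h

theorem posPart_le_map_posPart_of_map_eq {α F : Type*} [Lattice α] [AddCommGroup α]
    [IsOrderedAddMonoid α] [FunLike F α α] [AddMonoidHomClass F α α] (L : F)
    (hpos : ∀ a, 0 ≤ a → 0 ≤ L a) {a : α} (ha : L a = a) : a⁺ ≤ L a⁺ :=
  sup_le (ha.symm.trans_le <| (monotone_iff_map_nonneg L).2 hpos (le_posPart a))
    (hpos _ (posPart_nonneg a))

theorem map_posPart_eq_of_map_eq {M : Type*} [MeasurableSpace M] {m : Measure M}
    (L : Lp ℝ 1 m →ₗ[ℝ] Lp ℝ 1 m) (hpos : ∀ φ : Lp ℝ 1 m, 0 ≤ φ → 0 ≤ L φ)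
    (hint : ∀ φ : Lp ℝ 1 m, ∫ x, (L φ) x ∂m = ∫ x, φ x ∂m) {φ : Lp ℝ 1 m} (hfix : L φ = φ) :
    L φ⁺ = φ⁺ :=
  (Lp.eq_of_le_of_integral_eq (posPart_le_map_posPart_of_map_eq L hpos hfix) (hint _).symm).symm

/-- If `L : L¹(m) → L¹(m)` is a positive, integral-preserving
linear operator and `φ ∈ L¹(m)` is a fixed point of `L`, then the positive part
`φ⁺ = φ ⊔ 0` and the negative part `φ⁻ = (-φ) ⊔ 0` of `φ` are also fixed by `L`. -/
theorem positive_integral_preserving_fixes_pos_neg_parts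
    {M : Type*} [MeasurableSpace M] (m : Measure M)
    (L : Lp ℝ 1 m →ₗ[ℝ] Lp ℝ 1 m)
    (hpos : ∀ φ : Lp ℝ 1 m, 0 ≤ φ → 0 ≤ L φ)
    (hint : ∀ φ : Lp ℝ 1 m, ∫ x, (L φ) x ∂m = ∫ x, φ x ∂m)
    (φ : Lp ℝ 1 m) (hfix : L φ = φ) :
    L (φ ⊔ 0) = φ ⊔ 0 ∧ L ((-φ) ⊔ 0) = (-φ) ⊔ 0 :=
  ⟨map_posPart_eq_of_map_eq L hpos hint hfix,
    map_posPart_eq_of_map_eq L hpos hint (by rw [map_neg, hfix])⟩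
end

section
/- Let M and Δ be measurable spaces, ν a probability measure on Δ, f : M × Δ → M measurable, and W ⊆ M measurable. Let μ̄ be a probability measure on M with μ̄(M \ W) = 0 and set c = ∫_W P(x, W) dμ̄(x), where P(x, A) = ν{ω ∈ Δ : f(x, ω) ∈ A}; assume c > 0. Let ν^∞ be the infinite product of copies of ν on Δ^ℕ, ϑ the left shift on Δ^ℕ, and S(x, ω) = (f(x, ω₁), ϑω) the skew product on M × Δ^ℕ. Then the following are equivalent: (i) μ̄ is conditionally stationary on W, i.e. μ̄(A) = (1/c) ∫_W P(x, A) dμ̄(x) for every measurable A ⊆ W; (ii) the product measure μ̄ ⊗ ν^∞ is conditionally invariant for S on W × Δ^ℕ, i.e. (μ̄ ⊗ ν^∞)(S⁻¹(B)) = c · (μ̄ ⊗ ν^∞)(B) for every measurable B ⊆ W × Δ^ℕ (note that c = (μ̄ ⊗ ν^∞)(S⁻¹(W × Δ^ℕ))). -/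
open MeasureTheory ENNReal ProbabilityTheory

/-- Let `ν` be a probability measure on `Δ`, `f : M × Δ → M`
measurable, `W ⊆ M` measurable, and `μ` a probability measure on `M`
concentrated on `W`.  Let `νseq` be the infinite product of copies of `ν` on
`Δ^ℕ` (characterized by the fact that the first coordinate together with the
shifted tail has distribution `ν ⊗ νseq`), let
`S(x, ω) = (f(x, ω₁), ϑω)` be the skew product, `P(x, A) = ν{ω : f(x, ω) ∈ A}`
and `c = ∫_W P(x, W) dμ(x) > 0`.  Then `μ` is conditionally stationary on `W`,
i.e. `μ(A) = (1/c) ∫_W P(x, A) dμ(x)` for all measurable `A ⊆ W`, if and only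
if `μ ⊗ νseq` is conditionally invariant for `S` on `W × Δ^ℕ`, i.e.
`(μ ⊗ νseq)(S⁻¹ B) = c · (μ ⊗ νseq)(B)` for all measurable `B ⊆ W × Δ^ℕ`. -/
theorem conditionally_stationary_iff_conditionally_invariant
    {M Δ : Type*} [MeasurableSpace M] [MeasurableSpace Δ]
    (ν : Measure Δ) [IsProbabilityMeasure ν]
    (f : M × Δ → M) (hf : Measurable f)
    (W : Set M) (hW : MeasurableSet W)
    (μ : Measure M) [IsProbabilityMeasure μ] (hμW : μ Wᶜ = 0)
    (νseq : Measure (ℕ → Δ)) [IsProbabilityMeasure νseq]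
    (hνseq : Measure.map (fun ω : ℕ → Δ => (ω 0, fun n => ω (n + 1))) νseq
      = ν.prod νseq)
    (c : ℝ≥0∞) (hc : c = ∫⁻ x in W, ν {ω | f (x, ω) ∈ W} ∂μ) (hcpos : 0 < c) :
    (∀ A : Set M, MeasurableSet A → A ⊆ W →
        μ A = (∫⁻ x in W, ν {ω | f (x, ω) ∈ A} ∂μ) / c)
      ↔
    (∀ B : Set (M × (ℕ → Δ)), MeasurableSet B → B ⊆ W ×ˢ (Set.univ : Set (ℕ → Δ)) →
        (μ.prod νseq)
            ((fun p : M × (ℕ → Δ) => (f (p.1, p.2 0), fun n => p.2 (n + 1))) ⁻¹' B)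
          = c * (μ.prod νseq) B) := by
  -- basic measurability facts
  have hT : Measurable (fun ω : ℕ → Δ => (ω 0, fun n => ω (n + 1))) :=
    (measurable_pi_apply 0).prodMk
      (measurable_pi_lambda _ fun n => measurable_pi_apply (n + 1))
  have hS : Measurable (fun p : M × (ℕ → Δ) => (f (p.1, p.2 0), fun n => p.2 (n + 1))) :=
    (hf.comp (measurable_fst.prodMk ((measurable_pi_apply 0).comp measurable_snd))).prodMk
      (measurable_pi_lambda _ fun n => (measurable_pi_apply (n + 1)).comp measurable_snd)
  have hc_ne_top : c ≠ ⊤ := by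
    have h1 : c ≤ μ W := by
      rw [hc]
      calc ∫⁻ x in W, ν {ω | f (x, ω) ∈ W} ∂μ ≤ ∫⁻ _ in W, 1 ∂μ :=
            lintegral_mono fun x => prob_le_one
        _ = μ W := by simp
    exact ne_top_of_le_ne_top (measure_ne_top μ W) h1
  have hc_ne : c ≠ 0 := hcpos.ne'
  -- μ is concentrated on W
  have hrestrict : μ.restrict Wᶜ = 0 := Measure.restrict_eq_zero.2 hμW
  have hlint_W : ∀ (g : M → ℝ≥0∞), ∫⁻ x, g x ∂μ = ∫⁻ x in W, g x ∂μ := by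
    intro g
    rw [← lintegral_add_compl g hW, hrestrict]
    simp
  -- the key computation: the measure of S⁻¹ B
  have key : ∀ B : Set (M × (ℕ → Δ)), MeasurableSet B →
      (μ.prod νseq)
          ((fun p : M × (ℕ → Δ) => (f (p.1, p.2 0), fun n => p.2 (n + 1))) ⁻¹' B)
        = ∫⁻ x, ∫⁻ u, νseq (Prod.mk (f (x, u)) ⁻¹' B) ∂ν ∂μ := by
    intro B hB
    rw [Measure.prod_apply (hS hB)]
    refine lintegral_congr fun x => ?_
    have hFx : Measurable (fun q : Δ × (ℕ → Δ) => ((f (x, q.1), q.2) : M × (ℕ → Δ))) :=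
      (hf.comp (measurable_const.prodMk measurable_fst)).prodMk measurable_snd
    have h1 : Prod.mk x ⁻¹'
        ((fun p : M × (ℕ → Δ) => (f (p.1, p.2 0), fun n => p.2 (n + 1))) ⁻¹' B)
        = (fun ω : ℕ → Δ => (ω 0, fun n => ω (n + 1))) ⁻¹'
          ((fun q : Δ × (ℕ → Δ) => ((f (x, q.1), q.2) : M × (ℕ → Δ))) ⁻¹' B) := rfl
    rw [h1, ← Measure.map_apply hT (hFx hB), hνseq, Measure.prod_apply (hFx hB)]
    rfl
  constructor
  · -- stationarity → conditional invariance
    intro h B hB hBW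
    -- the kernel x ↦ ν.map (f (x, ·))
    set κ : Kernel M M := Kernel.map ((Kernel.id : Kernel M M) ×ₖ Kernel.const M ν) f with hκdef
    have hκ : ∀ x, κ x = ν.map (fun u => f (x, u)) := by
      intro x
      rw [hκdef, Kernel.map_apply _ hf, Kernel.prod_apply, Kernel.id_apply, Kernel.const_apply,
        Measure.dirac_prod, Measure.map_map hf measurable_prodMk_left]
      rfl
    have hm : ∀ x : M, Measurable fun u : Δ => f (x, u) := fun x =>
      hf.comp measurable_prodMk_left
    have hκapp : ∀ x (A : Set M), MeasurableSet A → κ x A = ν {u | f (x, u) ∈ A} := by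
      intro x A hA
      rw [hκ, Measure.map_apply (hm x) hA]
      rfl
    set μstar : Measure M := (μ.restrict W).bind κ with hμstar
    have hμstar_apply : ∀ (A : Set M), MeasurableSet A →
        μstar A = ∫⁻ x in W, ν {u | f (x, u) ∈ A} ∂μ := by
      intro A hA
      rw [hμstar, Measure.bind_apply hA κ.measurable.aemeasurable]
      exact lintegral_congr fun x => hκapp x A hA
    -- μstar agrees with c • μ on W
    have hrW : μstar.restrict W = (c • μ).restrict W := by
      ext A hA
      rw [Measure.restrict_apply hA, Measure.restrict_apply hA,
        hμstar_apply (A ∩ W) (hA.inter hW), Measure.smul_apply, smul_eq_mul,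
        h (A ∩ W) (hA.inter hW) Set.inter_subset_right,
        ENNReal.mul_div_cancel hc_ne hc_ne_top]
    -- the section function of B
    set g : M → ℝ≥0∞ := fun y => νseq (Prod.mk y ⁻¹' B) with hg
    have hgm : Measurable g := measurable_measure_prodMk_left hB
    have hg0 : ∀ y ∉ W, g y = 0 := by
      intro y hy
      show νseq (Prod.mk y ⁻¹' B) = 0
      have : Prod.mk y ⁻¹' B = ∅ := by
        ext ω
        simp only [Set.mem_preimage, Set.mem_empty_iff_false, iff_false]
        intro hmem
        exact hy (hBW hmem).1
      rw [this, measure_empty]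
    have hgind : g = W.indicator g := by
      ext y
      by_cases hy : y ∈ W
      · rw [Set.indicator_of_mem hy]
      · rw [Set.indicator_of_notMem hy, hg0 y hy]
    rw [key B hB, hlint_W]
    have hstep : ∀ x, ∫⁻ u, g (f (x, u)) ∂ν = ∫⁻ y, g y ∂(κ x) := by
      intro x
      rw [hκ x, lintegral_map hgm (hm x)]
    calc ∫⁻ x in W, ∫⁻ u, νseq (Prod.mk (f (x, u)) ⁻¹' B) ∂ν ∂μ
        = ∫⁻ x in W, ∫⁻ y, g y ∂(κ x) ∂μ := lintegral_congr fun x => hstep x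
      _ = ∫⁻ y, g y ∂μstar := (Measure.lintegral_bind κ.measurable.aemeasurable hgm.aemeasurable).symm
      _ = ∫⁻ y, W.indicator g y ∂μstar := by rw [← hgind]
      _ = ∫⁻ y in W, g y ∂μstar := lintegral_indicator hW g
      _ = c * ∫⁻ y in W, g y ∂μ := by
          rw [hrW, Measure.restrict_smul, lintegral_smul_measure, smul_eq_mul]
      _ = c * ∫⁻ y in W, W.indicator g y ∂μ := by rw [← hgind]
      _ = c * ∫⁻ y, W.indicator g y ∂μ := by
          rw [← (hlint_W (W.indicator g))]
      _ = c * ∫⁻ y, g y ∂μ := by rw [← hgind]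
      _ = c * (μ.prod νseq) B := by rw [Measure.prod_apply hB]
  · -- conditional invariance → stationarity
    intro h A hA hAW
    have hν0 : νseq.map (fun ω : ℕ → Δ => ω 0) = ν := by
      have : (fun ω : ℕ → Δ => ω 0)
          = Prod.fst ∘ (fun ω : ℕ → Δ => (ω 0, fun n => ω (n + 1))) := rfl
      rw [this, ← Measure.map_map measurable_fst hT, hνseq, Measure.map_fst_prod]
      simp
    have hB : MeasurableSet (A ×ˢ (Set.univ : Set (ℕ → Δ))) := hA.prod MeasurableSet.univ
    have hBW : A ×ˢ (Set.univ : Set (ℕ → Δ)) ⊆ W ×ˢ (Set.univ : Set (ℕ → Δ)) :=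
      Set.prod_mono hAW (le_refl _)
    have h2 := h (A ×ˢ (Set.univ : Set (ℕ → Δ))) hB hBW
    have hPB : (μ.prod νseq) (A ×ˢ (Set.univ : Set (ℕ → Δ))) = μ A := by
      rw [Measure.prod_prod]
      simp
    rw [key _ hB, hPB] at h2
    have hsec : ∀ x u, νseq (Prod.mk (f (x, u)) ⁻¹' (A ×ˢ (Set.univ : Set (ℕ → Δ))))
        = Set.indicator {u | f (x, u) ∈ A} (fun _ => 1) u := by
      intro x u
      by_cases hmem : f (x, u) ∈ A
      · have : Prod.mk (f (x, u)) ⁻¹' (A ×ˢ (Set.univ : Set (ℕ → Δ))) = Set.univ := by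
          ext ω; simp [hmem]
        rw [this, Set.indicator_of_mem (show u ∈ {u : Δ | f (x, u) ∈ A} from hmem)]
        simp
      · have : Prod.mk (f (x, u)) ⁻¹' (A ×ˢ (Set.univ : Set (ℕ → Δ))) = ∅ := by
          ext ω; simp [hmem]
        rw [this, Set.indicator_of_notMem
          (show u ∉ {u : Δ | f (x, u) ∈ A} from hmem), measure_empty]
    have hinner : ∀ x, ∫⁻ u, νseq (Prod.mk (f (x, u)) ⁻¹' (A ×ˢ (Set.univ : Set (ℕ → Δ)))) ∂ν
        = ν {u | f (x, u) ∈ A} := by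
      intro x
      calc ∫⁻ u, νseq (Prod.mk (f (x, u)) ⁻¹' (A ×ˢ (Set.univ : Set (ℕ → Δ)))) ∂ν
          = ∫⁻ u, Set.indicator {u | f (x, u) ∈ A} (fun _ => 1) u ∂ν :=
            lintegral_congr fun u => hsec x u
        _ = ν {u | f (x, u) ∈ A} := by
            have hms : MeasurableSet {u : Δ | f (x, u) ∈ A} :=
              (hf.comp measurable_prodMk_left) hA
            rw [lintegral_indicator hms]
            simp
    rw [lintegral_congr hinner, hlint_W] at h2
    exact (ENNReal.eq_div_iff hc_ne hc_ne_top).2 h2.symm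
end

section
/- Let M and Δ be measurable spaces, ν a probability measure on Δ, f : M × Δ → M measurable, W ⊆ M measurable, and let μ̄ be a probability measure on M with μ̄(M \ W) = 0 that is conditionally stationary on W, with escape parameter α = ∫_W P(x, W) dμ̄(x) ∈ (0, 1]. For n ∈ ℕ let Dⁿ = {(x, ω) ∈ W × Δ^ℕ : f^i(x; ω₁, …, ω_i) ∈ W for all 1 ≤ i ≤ n} be the set of initial conditions and noise sequences that remain in W for n iterates. Then (μ̄ ⊗ ν^∞)(Dⁿ) = αⁿ for every n ∈ ℕ. -/
open MeasureTheory ENNReal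

/-- Iterates of a random map: `f⁰(x) = x` and
`f^{k+1}(x; ω₁, …, ω_{k+1}) = f(f^k(x; ω₁, …, ω_k), ω_{k+1})`
(noise sequences are indexed from `0`). -/
def fIter {M Δ : Type*} (f : M × Δ → M) : ℕ → M → (ℕ → Δ) → M
  | 0, x, _ => x
  | k + 1, x, ω => f (fIter f k x ω, ω k)

/-- Let `μ` be a probability measure concentrated on a
measurable set `W ⊆ M` that is conditionally stationary on `W` for the random
map `f` with noise distribution `ν`, with escape parameter
`α = ∫_W P(x, W) dμ(x) ∈ (0, 1]`, where `P(x, A) = ν{ω : f(x, ω) ∈ A}`.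
Let `νseq` be the infinite product of copies of `ν` on `Δ^ℕ`.  Then the set
`Dⁿ` of initial conditions and noise sequences that remain in `W` for `n`
iterates satisfies `(μ ⊗ νseq)(Dⁿ) = αⁿ`. -/
theorem conditionally_stationary_survival_probability
    {M Δ : Type*} [MeasurableSpace M] [MeasurableSpace Δ]
    (ν : Measure Δ) [IsProbabilityMeasure ν]
    (f : M × Δ → M) (hf : Measurable f)
    (W : Set M) (hW : MeasurableSet W)
    (μ : Measure M) [IsProbabilityMeasure μ] (hμW : μ Wᶜ = 0)
    (νseq : Measure (ℕ → Δ)) [IsProbabilityMeasure νseq]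
    (hνseq : Measure.map (fun ω : ℕ → Δ => (ω 0, fun n => ω (n + 1))) νseq
      = ν.prod νseq)
    (α : ℝ≥0∞) (hα : α = ∫⁻ x in W, ν {ω | f (x, ω) ∈ W} ∂μ)
    (hαpos : 0 < α) (hα1 : α ≤ 1)
    (hstat : ∀ A : Set M, MeasurableSet A → A ⊆ W →
        μ A = (∫⁻ x in W, ν {ω | f (x, ω) ∈ A} ∂μ) / α)
    (n : ℕ) :
    (μ.prod νseq)
        {p : M × (ℕ → Δ) | p.1 ∈ W ∧ ∀ i, 1 ≤ i → i ≤ n → fIter f i p.1 p.2 ∈ W}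
      = α ^ n := by
  classical
  have hα0 : α ≠ 0 := hαpos.ne'
  have hαtop : α ≠ ∞ := (hα1.trans_lt one_lt_top).ne
  -- measurability of iterates
  have hfIter : ∀ k, Measurable fun p : M × (ℕ → Δ) => fIter f k p.1 p.2 := by
    intro k
    induction k with
    | zero => exact measurable_fst
    | succ k ih =>
        exact hf.comp (ih.prodMk ((measurable_pi_apply k).comp measurable_snd))
  -- shift identity for iterates
  have hshift : ∀ (i : ℕ) (x : M) (ω : ℕ → Δ),
      fIter f (i + 1) x ω = fIter f i (f (x, ω 0)) (fun m => ω (m + 1)) := by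
    intro i
    induction i with
    | zero => intro x ω; rfl
    | succ i ih =>
        intro x ω
        show f (fIter f (i+1) x ω, ω (i+1)) = _
        rw [ih x ω]; rfl
  -- survival sets (without initial condition)
  set E : ℕ → Set (M × (ℕ → Δ)) :=
    fun n => {p | ∀ i, 1 ≤ i → i ≤ n → fIter f i p.1 p.2 ∈ W} with hE
  have hEmeas : ∀ n, MeasurableSet (E n) := by
    intro n
    have : E n = ⋂ i ∈ Set.Icc 1 n, (fun p : M × (ℕ → Δ) => fIter f i p.1 p.2) ⁻¹' W := by
      ext p; simp [hE, Set.mem_Icc, and_imp]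
    rw [this]
    exact MeasurableSet.biInter (Set.to_countable _) fun i _ => (hfIter i) hW
  -- survival probability as a function of the starting point
  set h : ℕ → M → ℝ≥0∞ := fun n x => νseq (Prod.mk x ⁻¹' E n) with hh
  have hhmeas : ∀ n, Measurable (h n) := fun n =>
    measurable_measure_prodMk_left (hEmeas n)
  -- the goal set
  have hDset : ∀ n : ℕ,
      {p : M × (ℕ → Δ) | p.1 ∈ W ∧ ∀ i, 1 ≤ i → i ≤ n → fIter f i p.1 p.2 ∈ W}
        = (Prod.fst ⁻¹' W) ∩ E n := by
    intro n; ext p; simp [hE, Set.mem_setOf_eq]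
  have hDmeas : ∀ n, MeasurableSet ((Prod.fst ⁻¹' W : Set (M × (ℕ → Δ))) ∩ E n) :=
    fun n => (measurable_fst hW).inter (hEmeas n)
  -- product measure of the goal set
  have hprod : ∀ n : ℕ,
      (μ.prod νseq) ((Prod.fst ⁻¹' W : Set (M × (ℕ → Δ))) ∩ E n)
        = ∫⁻ x in W, h n x ∂μ := by
    intro n
    rw [Measure.prod_apply (hDmeas n), ← lintegral_indicator hW]
    congr 1
    ext x
    by_cases hx : x ∈ W
    · have : Prod.mk x ⁻¹' ((Prod.fst ⁻¹' W : Set (M × (ℕ → Δ))) ∩ E n)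
          = Prod.mk x ⁻¹' E n := by
        ext ω; simp [hx]
      rw [this, Set.indicator_of_mem hx]
    · have : Prod.mk x ⁻¹' ((Prod.fst ⁻¹' W : Set (M × (ℕ → Δ))) ∩ E n)
          = (∅ : Set (ℕ → Δ)) := by
        ext ω; simp [hx]
      rw [this, Set.indicator_of_notMem hx]
      simp
  -- recursion for h
  have hrec : ∀ (n : ℕ) (x : M),
      h (n + 1) x = ∫⁻ δ, Set.indicator W (h n) (f (x, δ)) ∂ν := by
    intro n x
    have hT : Measurable fun ω : ℕ → Δ => (ω 0, fun m => ω (m + 1)) :=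
      (measurable_pi_apply 0).prodMk
        (measurable_pi_iff.2 fun m => measurable_pi_apply (m + 1))
    have hg : Measurable fun q : Δ × (ℕ → Δ) => ((f (x, q.1), q.2) : M × (ℕ → Δ)) :=
      (hf.comp (measurable_const.prodMk measurable_fst)).prodMk measurable_snd
    set B : Set (Δ × (ℕ → Δ)) :=
      (fun q : Δ × (ℕ → Δ) => ((f (x, q.1), q.2) : M × (ℕ → Δ))) ⁻¹'
        ((Prod.fst ⁻¹' W) ∩ E n) with hB
    have hBmeas : MeasurableSet B := hg (hDmeas n)
    have hpre : Prod.mk x ⁻¹' E (n + 1)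
        = (fun ω : ℕ → Δ => (ω 0, fun m => ω (m + 1))) ⁻¹' B := by
      ext ω
      simp only [hB, hE, Set.mem_preimage, Set.mem_inter_iff, Set.mem_setOf_eq]
      constructor
      · intro H
        refine ⟨H 1 le_rfl (Nat.succ_le_succ (Nat.zero_le n)), fun i h1 h2 => ?_⟩
        rw [← hshift i x ω]
        exact H (i + 1) (Nat.succ_le_succ (Nat.zero_le i)) (Nat.succ_le_succ h2)
      · rintro ⟨H0, H⟩ i h1 h2
        rcases Nat.exists_eq_add_of_le h1 with ⟨j, rfl⟩
        rcases Nat.eq_zero_or_pos j with hj | hj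
        · subst hj; exact H0
        · rw [Nat.add_comm 1 j, hshift j x ω]
          exact H j hj (by omega)
    have : h (n + 1) x = (ν.prod νseq) B := by
      rw [hh]
      simp only [hpre]
      rw [← hνseq, Measure.map_apply hT hBmeas]
    rw [this, Measure.prod_apply hBmeas]
    congr 1
    ext δ
    by_cases hx : f (x, δ) ∈ W
    · have : Prod.mk δ ⁻¹' B = Prod.mk (f (x, δ)) ⁻¹' E n := by
        ext ω'; simp [hB, hx]
      rw [this, Set.indicator_of_mem hx]
    · have : Prod.mk δ ⁻¹' B = (∅ : Set (ℕ → Δ)) := by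
        ext ω'; simp [hB, hx]
      rw [this, Set.indicator_of_notMem hx]
      simp
  -- the pushforward of (μ.restrict W).prod ν under f, restricted to W, is α • μ.restrict W
  have hmap : (Measure.map f ((μ.restrict W).prod ν)).restrict W = α • μ.restrict W := by
    ext s hs
    rw [Measure.restrict_apply hs, Measure.map_apply hf (hs.inter hW),
      Measure.prod_apply (hf (hs.inter hW)), Measure.smul_apply, smul_eq_mul,
      Measure.restrict_apply hs]
    have hkey := hstat (s ∩ W) (hs.inter hW) Set.inter_subset_right
    have : (∫⁻ x in W, ν {ω | f (x, ω) ∈ s ∩ W} ∂μ)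
        = ∫⁻ x, ν (Prod.mk x ⁻¹' (f ⁻¹' (s ∩ W))) ∂(μ.restrict W) := rfl
    rw [this] at hkey
    rw [(ENNReal.eq_div_iff hα0 hαtop).mp hkey]
  -- key integral identity
  have hkeyint : ∀ n : ℕ,
      (∫⁻ x in W, ∫⁻ δ, Set.indicator W (h n) (f (x, δ)) ∂ν ∂μ)
        = α * ∫⁻ x in W, h n x ∂μ := by
    intro n
    have hgm : Measurable (Set.indicator W (h n)) := (hhmeas n).indicator hW
    have h1 : (∫⁻ x in W, ∫⁻ δ, Set.indicator W (h n) (f (x, δ)) ∂ν ∂μ)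
        = ∫⁻ p, Set.indicator W (h n) (f p) ∂((μ.restrict W).prod ν) :=
      (lintegral_prod _ (hgm.comp hf).aemeasurable).symm
    rw [h1, ← lintegral_map hgm hf, lintegral_indicator hW, hmap,
      lintegral_smul_measure, smul_eq_mul]
  -- main induction
  rw [hDset n, hprod n]
  induction n with
  | zero =>
      have hW1 : μ W = 1 := by
        have := measure_add_measure_compl (μ := μ) hW
        rw [hμW, add_zero, measure_univ] at this
        exact this
      have : ∀ x, h 0 x = 1 := by
        intro x
        have : Prod.mk x ⁻¹' E 0 = Set.univ := by
          ext ω; simp [hE]; omega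
        rw [hh]; simp only [this]; exact measure_univ
      simp only [this]
      rw [setLIntegral_const, hW1]
      simp
  | succ n ih =>
      calc ∫⁻ x in W, h (n + 1) x ∂μ
          = ∫⁻ x in W, ∫⁻ δ, Set.indicator W (h n) (f (x, δ)) ∂ν ∂μ := by
            apply lintegral_congr; intro x; exact hrec n x
        _ = α * ∫⁻ x in W, h n x ∂μ := hkeyint n
        _ = α * α ^ n := by rw [ih]
        _ = α ^ (n + 1) := (pow_succ' α n).symm
end

section
/- Let M and Δ be measurable spaces, ν a probability measure on Δ, f : M × Δ → M measurable, W ⊆ M measurable, and let μ̄ be a probability measure on M with μ̄(M \ W) = 0 that is conditionally stationary on W, with escape parameter α = ∫_W P(x, W) dμ̄(x) satisfying 0 < α < 1. Define the escape time χ(x, ω) = min{k ≥ 1 : f^k(x; ω₁, …, ω_k) ∉ W} (which is finite μ̄ ⊗ ν^∞-almost surely). Then the expected escape time from W equals 1/(1 − α): ∫_W ∫_{Δ^ℕ} χ(x, ω) dν^∞(ω) dμ̄(x) = 1/(1 − α). -/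
open MeasureTheory ENNReal

/-- The escape time from `W`: `χ(x, ω) = min{k ≥ 1 : f^k(x; ω₁, …, ω_k) ∉ W}`
(defined as `0` when the orbit never leaves `W`, which happens only on a null
set in the situation considered below). -/
noncomputable def escapeTime {M Δ : Type*} (f : M × Δ → M) (W : Set M)
    (x : M) (ω : ℕ → Δ) : ℕ :=
  sInf {k : ℕ | 1 ≤ k ∧ fIter f k x ω ∉ W}

lemma fIter_succ_shift {M Δ : Type*} (f : M × Δ → M) :
    ∀ (k : ℕ) (x : M) (ω : ℕ → Δ),
      fIter f (k + 1) x ω = fIter f k (f (x, ω 0)) (fun n => ω (n + 1))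
  | 0, x, ω => rfl
  | k + 1, x, ω => by
    show f (fIter f (k+1) x ω, ω (k+1)) = f (fIter f k (f (x, ω 0)) (fun n => ω (n+1)), ω (k+1))
    rw [fIter_succ_shift f k x ω]

lemma measurable_fIter {M Δ : Type*} [MeasurableSpace M] [MeasurableSpace Δ]
    {f : M × Δ → M} (hf : Measurable f) :
    ∀ k : ℕ, Measurable (fun p : M × (ℕ → Δ) => fIter f k p.1 p.2)
  | 0 => measurable_fst
  | k + 1 => hf.comp ((measurable_fIter hf k).prodMk
      ((measurable_pi_apply k).comp measurable_snd))

lemma nat_cast_eq_tsum_indicator (m : ℕ) :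
    (m : ℝ≥0∞) = ∑' k : ℕ, Set.indicator {j : ℕ | j < m} (fun _ => (1:ℝ≥0∞)) k := by
  rw [tsum_eq_sum (s := Finset.range m) (by
    intro k hk
    simp only [Finset.mem_range] at hk
    simp [Set.indicator_apply, hk])]
  simp only [Set.indicator_apply, Set.mem_setOf_eq]
  rw [Finset.sum_congr rfl (fun k hk => if_pos (Finset.mem_range.mp hk))]
  simp


/-- Let `μ` be a probability measure concentrated on a
measurable set `W ⊆ M` that is conditionally stationary on `W` for the random
map `f` with noise distribution `ν`, with escape parameter
`α = ∫_W P(x, W) dμ(x)` satisfying `0 < α < 1`, where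
`P(x, A) = ν{ω : f(x, ω) ∈ A}`.  Let `νseq` be the infinite product of copies
of `ν` on `Δ^ℕ`.  Then the expected escape time from `W` is `1/(1 − α)`:
`∫_W ∫ χ(x, ω) dνseq(ω) dμ(x) = (1 − α)⁻¹`. -/
theorem conditionally_stationary_expected_escape_time
    {M Δ : Type*} [MeasurableSpace M] [MeasurableSpace Δ]
    (ν : Measure Δ) [IsProbabilityMeasure ν]
    (f : M × Δ → M) (hf : Measurable f)
    (W : Set M) (hW : MeasurableSet W)
    (μ : Measure M) [IsProbabilityMeasure μ] (hμW : μ Wᶜ = 0)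
    (νseq : Measure (ℕ → Δ)) [IsProbabilityMeasure νseq]
    (hνseq : Measure.map (fun ω : ℕ → Δ => (ω 0, fun n => ω (n + 1))) νseq
      = ν.prod νseq)
    (α : ℝ≥0∞) (hα : α = ∫⁻ x in W, ν {ω | f (x, ω) ∈ W} ∂μ)
    (hαpos : 0 < α) (hα1 : α < 1)
    (hstat : ∀ A : Set M, MeasurableSet A → A ⊆ W →
        μ A = (∫⁻ x in W, ν {ω | f (x, ω) ∈ A} ∂μ) / α) :
    ∫⁻ x in W, (∫⁻ ω, (escapeTime f W x ω : ℝ≥0∞) ∂νseq) ∂μ = (1 - α)⁻¹ := by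
  have hα0 : α ≠ 0 := hαpos.ne'
  have hαtop : α ≠ ⊤ := (hα1.trans one_lt_top).ne
  have hμWone : μ W = 1 := (prob_compl_eq_zero_iff hW).mp hμW
  -- the sets of noise sequences keeping the orbit in W for the first k steps
  set A : ℕ → Set (M × (ℕ → Δ)) :=
    fun k => ⋂ j ∈ Finset.Icc 1 k, (fun p : M × (ℕ → Δ) => fIter f j p.1 p.2) ⁻¹' W with hA
  have hmemA : ∀ k (p : M × (ℕ → Δ)),
      p ∈ A k ↔ ∀ j, 1 ≤ j → j ≤ k → fIter f j p.1 p.2 ∈ W := by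
    intro k p
    simp [hA, Finset.mem_Icc]
  have hAmeas : ∀ k, MeasurableSet (A k) := by
    intro k
    exact MeasurableSet.biInter (Finset.Icc 1 k).countable_toSet
      (fun j _ => (measurable_fIter hf j) hW)
  set N : Set (M × (ℕ → Δ)) := ⋂ k, A k with hN
  have hNmeas : MeasurableSet N := MeasurableSet.iInter fun k => hAmeas k
  set g : ℕ → M → ℝ≥0∞ := fun k x => νseq (Prod.mk x ⁻¹' A k) with hg
  set n : M → ℝ≥0∞ := fun x => νseq (Prod.mk x ⁻¹' N) with hn
  have hgmeas : ∀ k, Measurable (g k) :=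
    fun k => measurable_measure_prodMk_left (hAmeas k)
  have hnmeas : Measurable n := measurable_measure_prodMk_left hNmeas
  -- transfer lemma
  have transfer : ∀ G : M → ℝ≥0∞, Measurable G →
      ∫⁻ x in W, (∫⁻ u, W.indicator G (f (x, u)) ∂ν) ∂μ = α * ∫⁻ x in W, G x ∂μ := by
    intro G hG
    have hGi : Measurable (W.indicator G) := hG.indicator hW
    have hmeq : (Measure.map f ((μ.restrict W).prod ν)).restrict W = α • μ.restrict W := by
      ext B hB
      rw [Measure.restrict_apply hB, Measure.map_apply hf (hB.inter hW),
          Measure.prod_apply (hf (hB.inter hW)), Measure.smul_apply, smul_eq_mul,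
          Measure.restrict_apply hB]
      have hs := hstat (B ∩ W) (hB.inter hW) Set.inter_subset_right
      have key : (∫⁻ x in W, ν {ω | f (x, ω) ∈ B ∩ W} ∂μ) = α * μ (B ∩ W) := by
        rw [hs, ENNReal.mul_div_cancel hα0 hαtop]
      exact key
    have h1 : ∫⁻ x in W, (∫⁻ u, W.indicator G (f (x, u)) ∂ν) ∂μ
        = ∫⁻ p, W.indicator G (f p) ∂((μ.restrict W).prod ν) :=
      (lintegral_prod _ ((hGi.comp hf).aemeasurable)).symm
    rw [h1, ← lintegral_map hGi hf, lintegral_indicator hW, hmeq,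
        lintegral_smul_measure, smul_eq_mul]
  -- recursion
  have hrec : ∀ k x, g (k+1) x = ∫⁻ u, W.indicator (g k) (f (x, u)) ∂ν := by
    intro k x
    have hpair : Measurable (fun ω : ℕ → Δ => (ω 0, fun n => ω (n + 1))) :=
      (measurable_pi_apply 0).prodMk (measurable_pi_lambda _ fun n => measurable_pi_apply (n+1))
    have h1 : Measurable fun q : Δ × (ℕ → Δ) => f (x, q.1) :=
      hf.comp (measurable_const.prodMk measurable_fst)
    have hSmeas : MeasurableSet {q : Δ × (ℕ → Δ) | f (x, q.1) ∈ W ∧ (f (x, q.1), q.2) ∈ A k} :=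
      (h1 hW).inter ((h1.prodMk measurable_snd) (hAmeas k))
    have hset : Prod.mk x ⁻¹' A (k+1)
        = (fun ω : ℕ → Δ => (ω 0, fun n => ω (n + 1))) ⁻¹'
          {q : Δ × (ℕ → Δ) | f (x, q.1) ∈ W ∧ (f (x, q.1), q.2) ∈ A k} := by
      ext ω
      simp only [Set.mem_preimage, Set.mem_setOf_eq, hmemA]
      constructor
      · intro h
        refine ⟨h 1 le_rfl (by omega), fun j h1j hjk => ?_⟩
        have := h (j+1) (by omega) (by omega)
        rwa [fIter_succ_shift] at this
      · rintro ⟨h0, h⟩ j h1j hjk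
        obtain ⟨m, rfl⟩ : ∃ m, j = m + 1 := ⟨j - 1, by omega⟩
        rw [fIter_succ_shift]
        rcases Nat.eq_zero_or_pos m with hm | hm
        · subst hm; exact h0
        · exact h m hm (by omega)
    show νseq (Prod.mk x ⁻¹' A (k+1)) = _
    rw [hset, ← Measure.map_apply hpair hSmeas, hνseq, Measure.prod_apply hSmeas]
    refine lintegral_congr fun u => ?_
    by_cases hu : f (x, u) ∈ W
    · have : (Prod.mk u ⁻¹' {q : Δ × (ℕ → Δ) | f (x, q.1) ∈ W ∧ (f (x, q.1), q.2) ∈ A k})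
          = Prod.mk (f (x, u)) ⁻¹' A k := by
        ext η; simp [hu]
      rw [this, Set.indicator_of_mem hu]
    · have : (Prod.mk u ⁻¹' {q : Δ × (ℕ → Δ) | f (x, q.1) ∈ W ∧ (f (x, q.1), q.2) ∈ A k})
          = ∅ := by
        ext η; simp [hu]
      rw [this, Set.indicator_of_notMem hu]
      simp
  -- integrals of g
  have hint : ∀ k, ∫⁻ x in W, g k x ∂μ = α ^ k := by
    intro k
    induction k with
    | zero =>
      have : ∀ x, g 0 x = 1 := by
        intro x
        have : A 0 = Set.univ := by
          ext p; simp [hmemA]; omega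
        simp [hg, this]
      simp only [this]
      simp [hμWone]
    | succ k ih =>
      calc ∫⁻ x in W, g (k+1) x ∂μ
          = ∫⁻ x in W, (∫⁻ u, W.indicator (g k) (f (x, u)) ∂ν) ∂μ := by
            exact lintegral_congr fun x => by rw [hrec]
        _ = α * ∫⁻ x in W, g k x ∂μ := transfer _ (hgmeas k)
        _ = α ^ (k+1) := by rw [ih, pow_succ, mul_comm]
  -- the never-escaping part is null
  have hnae : n =ᵐ[μ.restrict W] 0 := by
    have hle : ∀ k, ∫⁻ x in W, n x ∂μ ≤ α ^ k := by
      intro k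
      refine le_trans (lintegral_mono fun x => measure_mono ?_) (hint k).le
      exact Set.preimage_mono (Set.iInter_subset _ k)
    have h0 : ∫⁻ x in W, n x ∂μ = 0 := by
      refine le_antisymm ?_ (by positivity)
      exact ge_of_tendsto (ENNReal.tendsto_pow_atTop_nhds_zero_of_lt_one hα1)
        (Filter.Eventually.of_forall hle)
    exact (lintegral_eq_zero_iff hnmeas).mp h0
  -- escape time levels
  have hlevel : ∀ x k, {ω : ℕ → Δ | k < escapeTime f W x ω}
      = (Prod.mk x ⁻¹' A k) \ (Prod.mk x ⁻¹' N) := by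
    intro x k
    ext ω
    have hE : escapeTime f W x ω = sInf {m : ℕ | 1 ≤ m ∧ fIter f m x ω ∉ W} := rfl
    simp only [Set.mem_setOf_eq, Set.mem_diff, Set.mem_preimage, hN, Set.mem_iInter, hmemA]
    constructor
    · intro hk
      have hne : {m : ℕ | 1 ≤ m ∧ fIter f m x ω ∉ W}.Nonempty := by
        by_contra hemp
        rw [Set.not_nonempty_iff_eq_empty] at hemp
        rw [hE, hemp, Nat.sInf_empty] at hk
        omega
      have hmem := Nat.sInf_mem hne
      refine ⟨fun j h1j hjk => ?_, fun hall => ?_⟩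
      · by_contra hjW
        have := Nat.sInf_le (show j ∈ {m : ℕ | 1 ≤ m ∧ fIter f m x ω ∉ W} from ⟨h1j, hjW⟩)
        rw [← hE] at this
        omega
      · exact hmem.2 (hall (sInf {m : ℕ | 1 ≤ m ∧ fIter f m x ω ∉ W})
          (sInf {m : ℕ | 1 ≤ m ∧ fIter f m x ω ∉ W}) hmem.1 le_rfl)
    · rintro ⟨hAk, hNn⟩
      push_neg at hNn
      obtain ⟨m, j, h1j, hjm, hjW⟩ := hNn
      have hne : {m : ℕ | 1 ≤ m ∧ fIter f m x ω ∉ W}.Nonempty := ⟨j, h1j, hjW⟩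
      have hmem := Nat.sInf_mem hne
      rw [hE]
      by_contra hle
      push_neg at hle
      exact hmem.2 (hAk _ hmem.1 hle)
  -- inner integral
  have hinner : ∀ x, (∫⁻ ω, (escapeTime f W x ω : ℝ≥0∞) ∂νseq)
      = ∑' k : ℕ, (g k x - n x) := by
    intro x
    have hms : ∀ k, MeasurableSet {ω : ℕ → Δ | k < escapeTime f W x ω} := by
      intro k
      rw [hlevel]
      exact (measurable_prodMk_left (hAmeas k)).diff (measurable_prodMk_left hNmeas)
    calc ∫⁻ ω, (escapeTime f W x ω : ℝ≥0∞) ∂νseq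
        = ∫⁻ ω, ∑' k : ℕ, Set.indicator {ω' : ℕ → Δ | k < escapeTime f W x ω'}
            (fun _ => (1:ℝ≥0∞)) ω ∂νseq := by
          refine lintegral_congr fun ω => ?_
          rw [nat_cast_eq_tsum_indicator]
          exact tsum_congr fun k => by simp [Set.indicator_apply]
      _ = ∑' k : ℕ, ∫⁻ ω, Set.indicator {ω' : ℕ → Δ | k < escapeTime f W x ω'}
            (fun _ => (1:ℝ≥0∞)) ω ∂νseq :=
          lintegral_tsum fun k => (measurable_one.indicator (hms k)).aemeasurable
      _ = ∑' k : ℕ, νseq {ω' : ℕ → Δ | k < escapeTime f W x ω'} :=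
          tsum_congr fun k => lintegral_indicator_one (hms k)
      _ = ∑' k : ℕ, (g k x - n x) := by
          refine tsum_congr fun k => ?_
          rw [hlevel]
          exact measure_diff (Set.preimage_mono (Set.iInter_subset _ k))
            (measurable_prodMk_left hNmeas).nullMeasurableSet (measure_ne_top νseq _)
  calc ∫⁻ x in W, (∫⁻ ω, (escapeTime f W x ω : ℝ≥0∞) ∂νseq) ∂μ
      = ∫⁻ x in W, ∑' k : ℕ, (g k x - n x) ∂μ := lintegral_congr hinner
    _ = ∑' k : ℕ, ∫⁻ x in W, (g k x - n x) ∂μ :=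
        lintegral_tsum fun k => ((hgmeas k).sub hnmeas).aemeasurable
    _ = ∑' k : ℕ, ∫⁻ x in W, g k x ∂μ := by
        refine tsum_congr fun k => lintegral_congr_ae ?_
        filter_upwards [hnae] with x hx
        simp [hx]
    _ = ∑' k : ℕ, α ^ k := tsum_congr hint
    _ = (1 - α)⁻¹ := ENNReal.tsum_geometric α
end

section
/- Let (M, 𝒜, m) be a σ-finite measure space, Δ a measurable space with a probability measure ν, f : M × Δ → M measurable, and W ⊆ M measurable. Let μ̄ be a probability measure on M with μ̄(M \ W) = 0 that is conditionally stationary on W with escape parameter α = ∫_W P(x, W) dμ̄(x) satisfying 0 < α < 1, and suppose μ̄ is absolutely continuous with respect to m with density φ̄ satisfying φ̄ ≤ B m-almost everywhere for some constant B > 0. Then the m-average of the expected escape time from W satisfies the lower bound ∫_W ∫_{Δ^ℕ} χ(x, ω) dν^∞(ω) dm(x) ≥ (1/B) · 1/(1 − α). -/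
open MeasureTheory ENNReal

namespace EscapeAux

variable {M Δ : Type*} [MeasurableSpace M] [MeasurableSpace Δ]

lemma measurable_fIter (f : M × Δ → M) (hf : Measurable f) (k : ℕ) :
    Measurable (fun p : M × (ℕ → Δ) => fIter f k p.1 p.2) := by
  induction k with
  | zero => exact measurable_fst
  | succ k ih =>
      exact hf.comp (ih.prodMk ((measurable_pi_apply k).comp measurable_snd))

lemma fIter_shift (f : M × Δ → M) (k : ℕ) (x : M) (ω : ℕ → Δ) :
    fIter f (k + 1) x ω = fIter f k (f (x, ω 0)) (fun n => ω (n + 1)) := by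
  induction k with
  | zero => rfl
  | succ k ih =>
      rw [show fIter f (k + 1 + 1) x ω = f (fIter f (k + 1) x ω, ω (k + 1)) from rfl, ih]
      rfl

/-- The set of pairs `(x, ω)` whose first `k` iterates all stay in `W`. -/
def stay (f : M × Δ → M) (W : Set M) (k : ℕ) : Set (M × (ℕ → Δ)) :=
  {p | ∀ j, 1 ≤ j → j ≤ k → fIter f j p.1 p.2 ∈ W}

lemma measurableSet_stay (f : M × Δ → M) (hf : Measurable f) {W : Set M}
    (hW : MeasurableSet W) (k : ℕ) : MeasurableSet (stay f W k) := by
  have h : stay f W k = ⋂ j ∈ {j : ℕ | 1 ≤ j ∧ j ≤ k},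
      (fun p : M × (ℕ → Δ) => fIter f j p.1 p.2) ⁻¹' W := by
    ext p
    simp [stay, and_imp]
  rw [h]
  exact MeasurableSet.biInter (Set.to_countable _)
    (fun j _ => (measurable_fIter f hf j) hW)

lemma measurable_escapeTime (f : M × Δ → M) (hf : Measurable f) {W : Set M}
    (hW : MeasurableSet W) :
    Measurable (fun p : M × (ℕ → Δ) => escapeTime f W p.1 p.2) := by
  apply measurable_to_countable'
  intro n
  match n with
  | 0 =>
    have h : (fun p : M × (ℕ → Δ) => escapeTime f W p.1 p.2) ⁻¹' {0}
        = ⋂ j, ⋂ (_ : 1 ≤ j), (fun p : M × (ℕ → Δ) => fIter f j p.1 p.2) ⁻¹' W := by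
      ext p
      simp only [Set.mem_preimage, Set.mem_singleton_iff, Set.mem_iInter]
      constructor
      · intro h j hj
        by_contra hc
        have hne : {k : ℕ | 1 ≤ k ∧ fIter f k p.1 p.2 ∉ W}.Nonempty := ⟨j, hj, hc⟩
        have h1 := (Nat.sInf_mem hne).1
        rw [escapeTime] at h
        omega
      · intro h
        rw [escapeTime]
        have he : {k : ℕ | 1 ≤ k ∧ fIter f k p.1 p.2 ∉ W} = ∅ := by
          ext k
          simp only [Set.mem_setOf_eq, Set.mem_empty_iff_false, iff_false, not_and, not_not]
          exact fun hk => h k hk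
        rw [he, Nat.sInf_empty]
    rw [h]
    exact MeasurableSet.iInter fun j => MeasurableSet.iInter fun _ =>
      (measurable_fIter f hf j) hW
  | (n + 1) =>
    have h : (fun p : M × (ℕ → Δ) => escapeTime f W p.1 p.2) ⁻¹' {n + 1}
        = ((fun p : M × (ℕ → Δ) => fIter f (n + 1) p.1 p.2) ⁻¹' W)ᶜ ∩
          ⋂ j, ⋂ (_ : 1 ≤ j), ⋂ (_ : j ≤ n),
            (fun p : M × (ℕ → Δ) => fIter f j p.1 p.2) ⁻¹' W := by
      ext p
      simp only [Set.mem_preimage, Set.mem_singleton_iff, Set.mem_inter_iff,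
        Set.mem_compl_iff, Set.mem_iInter]
      constructor
      · intro h
        have hne : {k : ℕ | 1 ≤ k ∧ fIter f k p.1 p.2 ∉ W}.Nonempty := by
          by_contra hc
          rw [Set.not_nonempty_iff_eq_empty] at hc
          rw [escapeTime, hc, Nat.sInf_empty] at h
          omega
        have hmem := Nat.sInf_mem hne
        rw [escapeTime] at h
        rw [h] at hmem
        refine ⟨hmem.2, fun j hj1 hjn => ?_⟩
        by_contra hc
        have hle := Nat.sInf_le
          (show j ∈ {k : ℕ | 1 ≤ k ∧ fIter f k p.1 p.2 ∉ W} from ⟨hj1, hc⟩)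
        omega
      · rintro ⟨hout, hin⟩
        have hmem : n + 1 ∈ {k : ℕ | 1 ≤ k ∧ fIter f k p.1 p.2 ∉ W} := ⟨by omega, hout⟩
        have hne : {k : ℕ | 1 ≤ k ∧ fIter f k p.1 p.2 ∉ W}.Nonempty := ⟨_, hmem⟩
        have hle := Nat.sInf_le hmem
        have hInf := Nat.sInf_mem hne
        rw [escapeTime]
        by_contra hne'
        have hlt : sInf {k : ℕ | 1 ≤ k ∧ fIter f k p.1 p.2 ∉ W} ≤ n := by omega
        exact hInf.2 (hin _ hInf.1 hlt)
    rw [h]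
    exact (((measurable_fIter f hf (n + 1)) hW).compl).inter
      (MeasurableSet.iInter fun j => MeasurableSet.iInter fun _ =>
        MeasurableSet.iInter fun _ => (measurable_fIter f hf j) hW)

end EscapeAux

/-- Let `(M, m)` be a σ-finite measure space and `μ` a
probability measure concentrated on a measurable set `W ⊆ M`, conditionally
stationary on `W` for the random map `f` with noise distribution `ν`, with
escape parameter `α = ∫_W P(x, W) dμ(x)`, `0 < α < 1`.  Suppose `μ = φ̄ · m`
is absolutely continuous with density `φ̄ ≤ B` `m`-a.e. for a constant
`B > 0`.  Then the `m`-average of the expected escape time from `W` satisfies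
`∫_W ∫ χ(x, ω) dνseq(ω) dm(x) ≥ (1/B) · (1 − α)⁻¹`. -/
theorem average_escape_time_lower_bound
    {M Δ : Type*} [MeasurableSpace M] [MeasurableSpace Δ]
    (m : Measure M) [SigmaFinite m]
    (ν : Measure Δ) [IsProbabilityMeasure ν]
    (f : M × Δ → M) (hf : Measurable f)
    (W : Set M) (hW : MeasurableSet W)
    (μ : Measure M) [IsProbabilityMeasure μ] (hμW : μ Wᶜ = 0)
    (φbar : M → ℝ≥0∞) (hφbar : Measurable φbar)
    (hμm : μ = m.withDensity φbar)
    (B : NNReal) (hB : 0 < B) (hφB : ∀ᵐ x ∂m, φbar x ≤ (B : ℝ≥0∞))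
    (νseq : Measure (ℕ → Δ)) [IsProbabilityMeasure νseq]
    (hνseq : Measure.map (fun ω : ℕ → Δ => (ω 0, fun n => ω (n + 1))) νseq
      = ν.prod νseq)
    (α : ℝ≥0∞) (hα : α = ∫⁻ x in W, ν {ω | f (x, ω) ∈ W} ∂μ)
    (hαpos : 0 < α) (hα1 : α < 1)
    (hstat : ∀ A : Set M, MeasurableSet A → A ⊆ W →
        μ A = (∫⁻ x in W, ν {ω | f (x, ω) ∈ A} ∂μ) / α) :
    (B : ℝ≥0∞)⁻¹ * (1 - α)⁻¹
      ≤ ∫⁻ x in W, (∫⁻ ω, (escapeTime f W x ω : ℝ≥0∞) ∂νseq) ∂m := by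
  classical
  have hα0 : α ≠ 0 := hαpos.ne'
  have hαtop : α ≠ ∞ := (hα1.trans ENNReal.one_lt_top).ne
  -- the "staying" probability functions
  set g : ℕ → M → ℝ≥0∞ :=
    fun k x => νseq (Prod.mk x ⁻¹' EscapeAux.stay f W k) with hg
  have hstayMeas : ∀ k, MeasurableSet (EscapeAux.stay f W k) :=
    fun k => EscapeAux.measurableSet_stay f hf hW k
  have hgmeas : ∀ k, Measurable (g k) :=
    fun k => measurable_measure_prodMk_left (hstayMeas k)
  -- the sub-Markov operator identity
  have hop : ∀ h : M → ℝ≥0∞, Measurable h →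
      ∫⁻ x in W, ∫⁻ a, W.indicator h (f (x, a)) ∂ν ∂μ = α * ∫⁻ x in W, h x ∂μ := by
    intro h hh
    have hWind : Measurable (W.indicator h) := hh.indicator hW
    have key : ∀ A : Set M, MeasurableSet A →
        (((μ.restrict W).prod ν).map f) (A ∩ W) = α * μ (A ∩ W) := by
      intro A hA
      have hAW : MeasurableSet (A ∩ W) := hA.inter hW
      rw [Measure.map_apply hf hAW, Measure.prod_apply (hf hAW)]
      have hs := hstat (A ∩ W) hAW Set.inter_subset_right
      have : ∫⁻ x in W, ν (Prod.mk x ⁻¹' (f ⁻¹' (A ∩ W))) ∂μ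
          = ∫⁻ x in W, ν {ω | f (x, ω) ∈ A ∩ W} ∂μ := rfl
      rw [this, hs, ENNReal.mul_div_cancel hα0 hαtop]
    have hκ : (((μ.restrict W).prod ν).map f).restrict W = α • μ.restrict W := by
      ext A hA
      simp only [Measure.restrict_apply hA, Measure.smul_apply, smul_eq_mul]
      exact key A hA
    calc ∫⁻ x in W, ∫⁻ a, W.indicator h (f (x, a)) ∂ν ∂μ
        = ∫⁻ p, W.indicator h (f p) ∂((μ.restrict W).prod ν) :=
          (MeasureTheory.lintegral_prod (fun p => W.indicator h (f p))
            ((hWind.comp hf).aemeasurable)).symm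
      _ = ∫⁻ y, W.indicator h y ∂(((μ.restrict W).prod ν).map f) :=
          (lintegral_map hWind hf).symm
      _ = ∫⁻ y in W, h y ∂(((μ.restrict W).prod ν).map f) := by
          rw [lintegral_indicator hW]
      _ = ∫⁻ y, h y ∂((((μ.restrict W).prod ν).map f).restrict W) := rfl
      _ = α * ∫⁻ x in W, h x ∂μ := by
          rw [hκ, lintegral_smul_measure, smul_eq_mul]
  -- the recursion for g
  have hπ : Measurable (fun ω : ℕ → Δ => (ω 0, fun n => ω (n + 1))) :=
    (measurable_pi_apply 0).prodMk
      (measurable_pi_lambda _ fun n => measurable_pi_apply (n + 1))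
  have hrec : ∀ k x, g (k + 1) x = ∫⁻ a, W.indicator (g k) (f (x, a)) ∂ν := by
    intro k x
    have h1 : Measurable (fun q : Δ × (ℕ → Δ) => f (x, q.1)) :=
      hf.comp (measurable_const.prodMk measurable_fst)
    have hE : MeasurableSet {q : Δ × (ℕ → Δ) | f (x, q.1) ∈ W ∧
        (f (x, q.1), q.2) ∈ EscapeAux.stay f W k} := by
      exact (h1 hW).inter ((h1.prodMk measurable_snd) (hstayMeas k))
    have hset : Prod.mk x ⁻¹' EscapeAux.stay f W (k + 1)
        = (fun ω : ℕ → Δ => (ω 0, fun n => ω (n + 1))) ⁻¹'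
          {q : Δ × (ℕ → Δ) | f (x, q.1) ∈ W ∧
            (f (x, q.1), q.2) ∈ EscapeAux.stay f W k} := by
      ext ω
      simp only [Set.mem_preimage, Set.mem_setOf_eq, EscapeAux.stay]
      constructor
      · intro h
        refine ⟨h 1 le_rfl (by omega), fun j hj1 hjk => ?_⟩
        have h2 := h (j + 1) (by omega) (by omega)
        rwa [EscapeAux.fIter_shift] at h2
      · rintro ⟨h0, hrest⟩ j hj1 hjk
        match j, hj1 with
        | 1, _ => exact h0
        | (j + 2), _ =>
          rw [EscapeAux.fIter_shift]
          exact hrest (j + 1) (by omega) (by omega)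
    calc g (k + 1) x
        = νseq ((fun ω : ℕ → Δ => (ω 0, fun n => ω (n + 1))) ⁻¹'
            {q : Δ × (ℕ → Δ) | f (x, q.1) ∈ W ∧
              (f (x, q.1), q.2) ∈ EscapeAux.stay f W k}) := by
          show νseq (Prod.mk x ⁻¹' EscapeAux.stay f W (k + 1)) = _
          rw [hset]
      _ = (ν.prod νseq) {q : Δ × (ℕ → Δ) | f (x, q.1) ∈ W ∧
              (f (x, q.1), q.2) ∈ EscapeAux.stay f W k} := by
          rw [← hνseq, Measure.map_apply hπ hE]
      _ = ∫⁻ a, νseq {ω' | f (x, a) ∈ W ∧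
              (f (x, a), ω') ∈ EscapeAux.stay f W k} ∂ν := by
          rw [Measure.prod_apply hE]; rfl
      _ = ∫⁻ a, W.indicator (g k) (f (x, a)) ∂ν := by
          apply lintegral_congr
          intro a
          by_cases hfa : f (x, a) ∈ W
          · rw [Set.indicator_of_mem hfa]
            have : {ω' | f (x, a) ∈ W ∧ (f (x, a), ω') ∈ EscapeAux.stay f W k}
                = Prod.mk (f (x, a)) ⁻¹' EscapeAux.stay f W k := by
              ext ω'; simp [hfa]
            rw [this]
          · rw [Set.indicator_of_notMem hfa]
            have : {ω' | f (x, a) ∈ W ∧ (f (x, a), ω') ∈ EscapeAux.stay f W k}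
                = (∅ : Set (ℕ → Δ)) := by
              ext ω'; simp [hfa]
            rw [this, measure_empty]
  -- μ W = 1
  have hWμ : μ W = 1 := by
    have h := measure_add_measure_compl (μ := μ) hW
    rw [hμW, add_zero, measure_univ] at h
    exact h
  -- ∫ g_k dμ = α ^ k
  have hgint : ∀ k, ∫⁻ x in W, g k x ∂μ = α ^ k := by
    intro k
    induction k with
    | zero =>
      have h0 : ∀ x, g 0 x = 1 := by
        intro x
        have : Prod.mk x ⁻¹' EscapeAux.stay f W 0 = Set.univ := by
          ext ω
          simp only [Set.mem_preimage, Set.mem_univ, iff_true, EscapeAux.stay,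
            Set.mem_setOf_eq]
          intro j h1 h2
          omega
        show νseq (Prod.mk x ⁻¹' EscapeAux.stay f W 0) = 1
        rw [this, measure_univ]
      simp only [h0, pow_zero, lintegral_const, one_mul, Measure.restrict_apply,
        MeasurableSet.univ, Set.univ_inter, hWμ]
    | succ k ih =>
      calc ∫⁻ x in W, g (k + 1) x ∂μ
          = ∫⁻ x in W, ∫⁻ a, W.indicator (g k) (f (x, a)) ∂ν ∂μ := by
            apply lintegral_congr; intro x; exact hrec k x
        _ = α * ∫⁻ x in W, g k x ∂μ := hop (g k) (hgmeas k)
        _ = α ^ (k + 1) := by rw [ih, pow_succ, mul_comm]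
  -- almost every point escapes
  set N : Set (M × (ℕ → Δ)) := ⋂ k, EscapeAux.stay f W k with hN
  have hNmeas : MeasurableSet N := MeasurableSet.iInter fun k => hstayMeas k
  have hNint : ∫⁻ x in W, νseq (Prod.mk x ⁻¹' N) ∂μ = 0 := by
    have hle : ∀ k, ∫⁻ x in W, νseq (Prod.mk x ⁻¹' N) ∂μ ≤ α ^ k := by
      intro k
      rw [← hgint k]
      refine lintegral_mono fun x => measure_mono fun ω hω => ?_
      exact Set.mem_iInter.mp hω k
    have h0 := ge_of_tendsto' (ENNReal.tendsto_pow_atTop_nhds_zero_of_lt_one hα1) hle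
    exact le_antisymm h0 zero_le
  have hae : ∀ᵐ x ∂(μ.restrict W), νseq (Prod.mk x ⁻¹' N) = 0 := by
    have hm : Measurable fun x => νseq (Prod.mk x ⁻¹' N) :=
      measurable_measure_prodMk_left hNmeas
    exact (lintegral_eq_zero_iff hm).mp hNint
  -- pointwise lower bound on the expected escape time
  have hχmeas := EscapeAux.measurable_escapeTime f hf hW
  have hχset : ∀ (x : M) (k : ℕ), MeasurableSet {ω : ℕ → Δ | k < escapeTime f W x ω} := by
    intro x k
    have h1 : MeasurableSet {p : M × (ℕ → Δ) | k < escapeTime f W p.1 p.2} :=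
      hχmeas ((Set.to_countable {n : ℕ | k < n}).measurableSet)
    exact measurable_prodMk_left h1
  have hptwise : ∀ᵐ x ∂(μ.restrict W),
      ∑' k, νseq (Prod.mk x ⁻¹' EscapeAux.stay f W k)
        ≤ ∫⁻ ω, (escapeTime f W x ω : ℝ≥0∞) ∂νseq := by
    filter_upwards [hae] with x hx
    have hterm : ∀ k, νseq (Prod.mk x ⁻¹' EscapeAux.stay f W k)
        ≤ νseq {ω | k < escapeTime f W x ω} := by
      intro k
      rw [← measure_diff_null hx]
      apply measure_mono
      rintro ω ⟨hωs, hωn⟩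
      have hne : {n : ℕ | 1 ≤ n ∧ fIter f n x ω ∉ W}.Nonempty := by
        by_contra hc
        rw [Set.not_nonempty_iff_eq_empty] at hc
        apply hωn
        simp only [Set.mem_preimage, hN, Set.mem_iInter]
        intro j
        intro i h1 hij
        by_contra hW'
        have : i ∈ {n : ℕ | 1 ≤ n ∧ fIter f n x ω ∉ W} := ⟨h1, hW'⟩
        rw [hc] at this
        exact this
      have hmem := Nat.sInf_mem hne
      show k < escapeTime f W x ω
      rw [escapeTime]
      by_contra hle
      push_neg at hle
      exact hmem.2 (hωs _ hmem.1 hle)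
    calc ∑' k, νseq (Prod.mk x ⁻¹' EscapeAux.stay f W k)
        ≤ ∑' k, νseq {ω | k < escapeTime f W x ω} := ENNReal.tsum_le_tsum hterm
      _ = ∫⁻ ω, (escapeTime f W x ω : ℝ≥0∞) ∂νseq := by
          have hpt : ∀ ω, (escapeTime f W x ω : ℝ≥0∞)
              = ∑' k : ℕ, Set.indicator {ω' | k < escapeTime f W x ω'}
                  (1 : (ℕ → Δ) → ℝ≥0∞) ω := by
            intro ω
            have hind : ∀ k, Set.indicator {ω' | k < escapeTime f W x ω'}
                (1 : (ℕ → Δ) → ℝ≥0∞) ω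
                = if k < escapeTime f W x ω then 1 else 0 := fun k => by
              simp only [Set.indicator_apply, Set.mem_setOf_eq, Pi.one_apply]
            rw [tsum_congr hind,
              tsum_eq_sum (s := Finset.range (escapeTime f W x ω)) (fun k hk => by
                rw [if_neg (by simpa using hk)]),
              Finset.sum_congr rfl (fun k hk => if_pos (Finset.mem_range.mp hk))]
            simp
          rw [lintegral_congr hpt,
            lintegral_tsum (fun k => (measurable_one.indicator (hχset x k)).aemeasurable)]
          exact tsum_congr fun k => (lintegral_indicator_one (hχset x k)).symm
  -- lower bound for the μ-integral
  set F : M → ℝ≥0∞ := fun x => ∫⁻ ω, (escapeTime f W x ω : ℝ≥0∞) ∂νseq with hF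
  have hFmeas : Measurable F := by
    have h1 : Measurable (fun p : M × (ℕ → Δ) => (escapeTime f W p.1 p.2 : ℝ≥0∞)) :=
      measurable_from_top.comp hχmeas
    exact h1.lintegral_prod_right'
  have hmain : (1 - α)⁻¹ ≤ ∫⁻ x in W, F x ∂μ := by
    have h1 : ∫⁻ x in W, ∑' k, g k x ∂μ ≤ ∫⁻ x in W, F x ∂μ :=
      lintegral_mono_ae hptwise
    have h2 : ∫⁻ x in W, ∑' k, g k x ∂μ = ∑' k, α ^ k := by
      rw [lintegral_tsum (fun k => ((hgmeas k).aemeasurable.restrict))]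
      exact tsum_congr hgint
    rw [h2, ENNReal.tsum_geometric] at h1
    exact h1
  -- pass from μ to m
  have hB0 : (B : ℝ≥0∞) ≠ 0 := by
    simpa using hB.ne'
  have hBtop : (B : ℝ≥0∞) ≠ ∞ := ENNReal.coe_ne_top
  have hμint : ∫⁻ x in W, F x ∂μ ≤ B * ∫⁻ x in W, F x ∂m := by
    rw [hμm, restrict_withDensity hW,
      lintegral_withDensity_eq_lintegral_mul _ hφbar hFmeas]
    calc ∫⁻ x, (φbar * F) x ∂(m.restrict W)
        ≤ ∫⁻ x, (B : ℝ≥0∞) * F x ∂(m.restrict W) := by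
          apply lintegral_mono_ae
          filter_upwards [ae_restrict_of_ae hφB] with x hx
          exact mul_le_mul_left hx _
      _ = B * ∫⁻ x in W, F x ∂m := lintegral_const_mul _ hFmeas
  have hfinal : (1 - α)⁻¹ ≤ B * ∫⁻ x in W, F x ∂m := le_trans hmain hμint
  calc (B : ℝ≥0∞)⁻¹ * (1 - α)⁻¹
      ≤ (B : ℝ≥0∞)⁻¹ * ((B : ℝ≥0∞) * ∫⁻ x in W, F x ∂m) :=
        mul_le_mul_right hfinal _
    _ = ∫⁻ x in W, F x ∂m := by
        rw [← mul_assoc, ENNReal.inv_mul_cancel hB0 hBtop, one_mul]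
end
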